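/- Let (P,≤,',0,1) be a bounded poset with an antitone involution ' that is a complementation which is the horizontal sum of subsets (B_i)_{i∈I}, each of which (with the induced order, restricted involution, and bounds 0,1) is a Boolean poset, and let a,b ∈ P. Then a C b if and only if c(a,b)={1}. -/
import Mathlib


/-- The lower cone of a subset `A` of a poset. -/
def lowerCone {P : Type*} [Preorder P] (A : Set P) : Set P := {x | ∀ a ∈ A, x ≤ a}

/-- The upper cone of a subset `A` of a poset. -/
def upperCone {P : Type*} [Preorder P] (A : Set P) : Set P := {x | ∀ a ∈ A, a ≤ x}

/-- The lower cone of `A` computed inside the subposet `S`. -/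
def lowerConeIn {P : Type*} [Preorder P] (S A : Set P) : Set P := {x ∈ S | ∀ a ∈ A, x ≤ a}

/-- The upper cone of `A` computed inside the subposet `S`. -/
def upperConeIn {P : Type*} [Preorder P] (S A : Set P) : Set P := {x ∈ S | ∀ a ∈ A, a ≤ x}

/-- The set of minimal elements of a subset of a poset. -/
def minSet {P : Type*} [PartialOrder P] (A : Set P) : Set P :=
  {x ∈ A | ∀ y ∈ A, y ≤ x → y = x}

/-- The subset `S` (with the induced order, the restriction of `neg` and bounds `⊥, ⊤`)
is a Boolean poset. -/
def IsBooleanOn {P : Type*} [PartialOrder P] [BoundedOrder P] (S : Set P) (neg : P → P) :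
    Prop :=
  (∀ x ∈ S, ∀ y ∈ S, ∀ z ∈ S,
    lowerConeIn S (upperConeIn S {x, y} ∪ {z}) =
      lowerConeIn S (upperConeIn S (lowerConeIn S {x, z} ∪ lowerConeIn S {y, z}))) ∧
  (∀ x ∈ S, lowerConeIn S {x, neg x} = {(⊥ : P)} ∧ upperConeIn S {x, neg x} = {(⊤ : P)})

/-- `P` is the horizontal sum of the family of subsets `B i`. -/
def IsHorizontalSum {P I : Type*} [PartialOrder P] [BoundedOrder P]
    (neg : P → P) (B : I → Set P) : Prop :=
  (∀ i, ⊥ ∈ B i ∧ ⊤ ∈ B i ∧ ∀ x ∈ B i, neg x ∈ B i) ∧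
  (⋃ i, B i) = Set.univ ∧
  (∀ i j, i ≠ j → B i ∩ B j = {⊥, ⊤}) ∧
  (∀ a b : P, (¬ ∃ i, a ∈ B i ∧ b ∈ B i) → ¬ a ≤ b ∧ ¬ b ≤ a)

/-- `a` and `b` are compatible: `U(a) = U(L(a,b) ∪ L(a,b'))`. -/
def Compat {P : Type*} [Preorder P] (neg : P → P) (a b : P) : Prop :=
  upperCone {a} = upperCone (lowerCone {a, b} ∪ lowerCone {a, neg b})

/-- The commutator `c(x,y) = Min U(L(x,y) ∪ L(x,y') ∪ L(x',y) ∪ L(x',y'))`. -/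
def commSet {P : Type*} [PartialOrder P] (neg : P → P) (x y : P) : Set P :=
  minSet (upperCone
    (lowerCone {x, y} ∪ lowerCone {x, neg y} ∪ lowerCone {neg x, y} ∪ lowerCone {neg x, neg y}))

section Helpers

variable {P : Type*} [Preorder P]

lemma mem_lowerCone' {A : Set P} {x : P} : x ∈ lowerCone A ↔ ∀ a ∈ A, x ≤ a := Iff.rfl

lemma mem_upperCone' {A : Set P} {x : P} : x ∈ upperCone A ↔ ∀ a ∈ A, a ≤ x := Iff.rfl

lemma mem_lowerConeIn' {S A : Set P} {x : P} :
    x ∈ lowerConeIn S A ↔ x ∈ S ∧ ∀ a ∈ A, x ≤ a := Iff.rfl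

lemma mem_upperConeIn' {S A : Set P} {x : P} :
    x ∈ upperConeIn S A ↔ x ∈ S ∧ ∀ a ∈ A, a ≤ x := Iff.rfl

lemma mem_lowerCone_pair {a b x : P} : x ∈ lowerCone {a, b} ↔ x ≤ a ∧ x ≤ b := by
  simp [lowerCone]

lemma mem_upperCone_singleton {a x : P} : x ∈ upperCone {a} ↔ a ≤ x := by
  simp [upperCone]

lemma mem_minSet' {Q : Type*} [PartialOrder Q] {A : Set Q} {x : Q} :
    x ∈ minSet A ↔ x ∈ A ∧ ∀ y ∈ A, y ≤ x → y = x := Iff.rfl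

end Helpers

section Key

variable {P I : Type*} [PartialOrder P] [BoundedOrder P]

lemma hs_compar {neg : P → P} {B : I → Set P} (hhs : IsHorizontalSum neg B) :
    ∀ u v : P, u ≤ v → ∃ j, u ∈ B j ∧ v ∈ B j := by
  intro u v huv
  by_contra h
  exact (hhs.2.2.2 u v h).1 huv

lemma hs_uniq {neg : P → P} {B : I → Set P} (hhs : IsHorizontalSum neg B) :
    ∀ {y : P} {j k : I}, y ∈ B j → y ∈ B k → y ≠ ⊥ → y ≠ ⊤ → j = k := by
  intro y j k hj hk h0 h1
  by_contra hjk
  have hmem : y ∈ ({⊥, ⊤} : Set P) := (hhs.2.2.1 j k hjk) ▸ Set.mem_inter hj hk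
  rcases hmem with h | h
  · exact h0 h
  · exact h1 h

lemma comp_top {neg : P → P}
    (hcomp : ∀ x : P, lowerCone {x, neg x} = {(⊥ : P)} ∧ upperCone {x, neg x} = {(⊤ : P)}) :
    ∀ u y : P, u ≤ y → neg u ≤ y → y = ⊤ := by
  intro u y h1 h2
  have : y ∈ upperCone {u, neg u} := by
    intro z hz
    simp only [Set.mem_insert_iff, Set.mem_singleton_iff] at hz
    rcases hz with rfl | rfl
    · exact h1
    · exact h2
  rw [(hcomp u).2] at this
  exact this

lemma comp_neg_bot {neg : P → P}
    (hcomp : ∀ x : P, lowerCone {x, neg x} = {(⊥ : P)} ∧ upperCone {x, neg x} = {(⊤ : P)}) :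
    neg (⊥ : P) = ⊤ := by
  have : neg (⊥ : P) ∈ upperCone {(⊥ : P), neg ⊥} := by
    intro z hz
    simp only [Set.mem_insert_iff, Set.mem_singleton_iff] at hz
    rcases hz with rfl | rfl
    · exact bot_le
    · exact le_rfl
  rw [(hcomp ⊥).2] at this
  exact this

lemma comp_neg_top {neg : P → P}
    (hcomp : ∀ x : P, lowerCone {x, neg x} = {(⊥ : P)} ∧ upperCone {x, neg x} = {(⊤ : P)}) :
    neg (⊤ : P) = ⊥ := by
  have : neg (⊤ : P) ∈ lowerCone {(⊤ : P), neg ⊤} := by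
    intro z hz
    simp only [Set.mem_insert_iff, Set.mem_singleton_iff] at hz
    rcases hz with rfl | rfl
    · exact le_top
    · exact le_rfl
  rw [(hcomp ⊤).1] at this
  exact this

/-- The key lemma: if `a` and `b` lie in a common Boolean block, then any upper bound of
`L(a,b) ∪ L(a,b')` lies above `a`. -/
lemma key_aux (neg : P → P) (B : I → Set P)
    (hcomp : ∀ x : P, lowerCone {x, neg x} = {(⊥ : P)} ∧ upperCone {x, neg x} = {(⊤ : P)})
    (hhs : IsHorizontalSum neg B)
    (hbool : ∀ i, IsBooleanOn (B i) neg)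
    {i : I} {a b : P} (ha : a ∈ B i) (hb : b ∈ B i)
    {x : P} (hx : ∀ y : P, (y ≤ a ∧ y ≤ b) ∨ (y ≤ a ∧ y ≤ neg b) → y ≤ x) :
    a ≤ x := by
  have htop := comp_top hcomp
  by_cases ha0 : a = ⊥
  · subst ha0; exact bot_le
  by_cases ha1 : a = ⊤
  · subst ha1
    have hb' : b ≤ x := hx b (Or.inl ⟨le_top, le_rfl⟩)
    have hnb' : neg b ≤ x := hx (neg b) (Or.inr ⟨le_top, le_rfl⟩)
    exact le_of_eq (htop b x hb' hnb').symm
  by_cases hb1 : b = ⊤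
  · exact hx a (Or.inl ⟨le_rfl, hb1 ▸ le_top⟩)
  by_cases hb0 : b = ⊥
  · have hnegbot : neg b = ⊤ := by rw [hb0]; exact comp_neg_bot hcomp
    exact hx a (Or.inr ⟨le_rfl, hnegbot ▸ le_top⟩)
  -- main case: a, b ∉ {⊥, ⊤}
  have hnegb : neg b ∈ B i := (hhs.1 i).2.2 b hb
  have hLa : ∀ y : P, y ≤ a → y ∈ B i := by
    intro y hy
    obtain ⟨j, hyj, haj⟩ := hs_compar hhs y a hy
    rwa [hs_uniq hhs haj ha ha0 ha1] at hyj
  have hUc : ∀ c : P, c ≠ ⊥ → c ≠ ⊤ → c ∈ B i → ∀ y, c ≤ y → y ∈ B i := by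
    intro c hc0 hc1 hci y hcy
    obtain ⟨j, hcj, hyj⟩ := hs_compar hhs c y hcy
    rwa [hs_uniq hhs hcj hci hc0 hc1] at hyj
  have hdist := (hbool i).1 b hb (neg b) hnegb a ha
  set D : Set P := lowerConeIn (B i) {b, a} ∪ lowerConeIn (B i) {neg b, a} with hDdef
  have haL : a ∈ lowerConeIn (B i) (upperConeIn (B i) {b, neg b} ∪ {a}) := by
    refine ⟨ha, ?_⟩
    intro z hz
    rcases hz with hz | hz
    · obtain ⟨hzS, hzU⟩ := hz
      have hb_le : b ≤ z := hzU b (by simp)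
      have hnb_le : neg b ≤ z := hzU (neg b) (by simp)
      rw [htop b z hb_le hnb_le]
      exact le_top
    · simp only [Set.mem_singleton_iff] at hz
      subst hz
      exact le_rfl
  rw [hdist] at haL
  have hDmem : ∀ y ∈ D, (y ≤ a ∧ y ≤ b) ∨ (y ≤ a ∧ y ≤ neg b) := by
    intro y hy
    rcases hy with ⟨hyS, hyle⟩ | ⟨hyS, hyle⟩
    · exact Or.inl ⟨hyle a (by simp), hyle b (by simp)⟩
    · exact Or.inr ⟨hyle a (by simp), hyle (neg b) (by simp)⟩
  by_cases hD0 : ∀ y ∈ D, y = ⊥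
  · have hbotU : (⊥ : P) ∈ upperConeIn (B i) D :=
      ⟨(hhs.1 i).1, fun z hz => le_of_eq (hD0 z hz)⟩
    have : a ≤ ⊥ := haL.2 ⊥ hbotU
    exact absurd (le_bot_iff.mp this) ha0
  · push_neg at hD0
    obtain ⟨c, hcD, hc0⟩ := hD0
    have hcd := hDmem c hcD
    have hca : c ≤ a := by rcases hcd with ⟨h, _⟩ | ⟨h, _⟩ <;> exact h
    have hc1 : c ≠ ⊤ := by
      intro h
      apply ha1
      apply top_le_iff.mp
      rw [← h]
      exact hca
    have hcx : c ≤ x := hx c hcd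
    have hcS : c ∈ B i := hLa c hca
    have hxS : x ∈ B i := hUc c hc0 hc1 hcS x hcx
    have hxU : x ∈ upperConeIn (B i) D := ⟨hxS, fun z hz => hx z (hDmem z hz)⟩
    exact haL.2 x hxU

end Key

/-- In a horizontal sum of Boolean posets, `a C b` holds iff `c(a,b) = {1}`. -/
theorem stmt16 {P I : Type*} [PartialOrder P] [BoundedOrder P]
    (neg : P → P) (B : I → Set P)
    (hinv : ∀ x : P, neg (neg x) = x)
    (hanti : ∀ x y : P, x ≤ y → neg y ≤ neg x)
    (hcomp : ∀ x : P, lowerCone {x, neg x} = {(⊥ : P)} ∧ upperCone {x, neg x} = {(⊤ : P)})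
    (hhs : IsHorizontalSum neg B)
    (hbool : ∀ i, IsBooleanOn (B i) neg)
    (a b : P) :
    Compat neg a b ↔ commSet neg a b = {(⊤ : P)} := by
  have htop := comp_top hcomp
  have hmemblock : ∀ x : P, ∃ i, x ∈ B i := by
    intro x
    have : x ∈ ⋃ i, B i := hhs.2.1 ▸ Set.mem_univ x
    exact Set.mem_iUnion.mp this
  by_cases hQ : ∃ i, a ∈ B i ∧ b ∈ B i
  · -- positive case: both sides hold
    obtain ⟨i, ha, hb⟩ := hQ
    have hna : neg a ∈ B i := (hhs.1 i).2.2 a ha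
    have keyab : ∀ x : P, (∀ y, ((y ≤ a ∧ y ≤ b) ∨ (y ≤ a ∧ y ≤ neg b)) → y ≤ x) → a ≤ x :=
      fun x hx => key_aux neg B hcomp hhs hbool ha hb hx
    have keynab : ∀ x : P,
        (∀ y, ((y ≤ neg a ∧ y ≤ b) ∨ (y ≤ neg a ∧ y ≤ neg b)) → y ≤ x) → neg a ≤ x :=
      fun x hx => key_aux neg B hcomp hhs hbool hna hb hx
    have hC : Compat neg a b := by
      unfold Compat
      apply Set.eq_of_subset_of_subset
      · intro x hx
        have hax : a ≤ x := hx a rfl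
        intro y hy
        rcases hy with hy | hy
        · exact le_trans ((mem_lowerCone_pair.mp hy).1) hax
        · exact le_trans ((mem_lowerCone_pair.mp hy).1) hax
      · intro x hx
        intro z hz
        simp only [Set.mem_singleton_iff] at hz
        subst hz
        apply keyab x
        intro y hy
        apply hx
        rcases hy with h | h
        · exact Or.inl (mem_lowerCone_pair.mpr h)
        · exact Or.inr (mem_lowerCone_pair.mpr h)
    have hUT : upperCone
        (lowerCone {a, b} ∪ lowerCone {a, neg b} ∪ lowerCone {neg a, b}
          ∪ lowerCone {neg a, neg b}) = {(⊤ : P)} := by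
      apply Set.eq_of_subset_of_subset
      · intro x hx
        have h1 : a ≤ x := by
          apply keyab x
          intro y hy
          apply hx
          rcases hy with h | h
          · exact Or.inl (Or.inl (Or.inl (mem_lowerCone_pair.mpr h)))
          · exact Or.inl (Or.inl (Or.inr (mem_lowerCone_pair.mpr h)))
        have h2 : neg a ≤ x := by
          apply keynab x
          intro y hy
          apply hx
          rcases hy with h | h
          · exact Or.inl (Or.inr (mem_lowerCone_pair.mpr h))
          · exact Or.inr (mem_lowerCone_pair.mpr h)
        exact htop a x h1 h2
      · intro x hx
        simp only [Set.mem_singleton_iff] at hx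
        subst hx
        intro y _
        exact le_top
    have hS : commSet neg a b = {(⊤ : P)} := by
      unfold commSet
      rw [hUT]
      apply Set.eq_of_subset_of_subset
      · intro x hx
        exact hx.1
      · intro x hx
        simp only [Set.mem_singleton_iff] at hx
        subst hx
        exact ⟨rfl, fun y hy _ => hy⟩
    exact iff_of_true hC hS
  · -- negative case: both sides fail
    have ha0 : a ≠ ⊥ := by
      rintro rfl
      obtain ⟨j, hbj⟩ := hmemblock b
      exact hQ ⟨j, (hhs.1 j).1, hbj⟩
    have ha1 : a ≠ ⊤ := by
      rintro rfl
      obtain ⟨j, hbj⟩ := hmemblock b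
      exact hQ ⟨j, (hhs.1 j).2.1, hbj⟩
    have hbt : (⊥ : P) ≠ ⊤ := by
      intro h
      apply ha1
      apply top_le_iff.mp
      rw [← h]
      exact bot_le
    have hzero : ∀ y : P, (y ≤ a ∨ y ≤ neg a) → (y ≤ b ∨ y ≤ neg b) → y = ⊥ := by
      intro y h1 h2
      by_contra hy0
      have hy1 : y ≠ ⊤ := by
        rintro rfl
        rcases h1 with h | h
        · exact ha1 (top_le_iff.mp h)
        · have hna : neg a = ⊤ := top_le_iff.mp h
          apply ha0
          rw [← hinv a, hna]
          exact comp_neg_top hcomp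
      have hja : ∃ j, y ∈ B j ∧ a ∈ B j := by
        rcases h1 with h | h
        · exact hs_compar hhs y a h
        · obtain ⟨j, hyj, hnj⟩ := hs_compar hhs y (neg a) h
          exact ⟨j, hyj, by rw [← hinv a]; exact (hhs.1 j).2.2 _ hnj⟩
      have hjb : ∃ j, y ∈ B j ∧ b ∈ B j := by
        rcases h2 with h | h
        · exact hs_compar hhs y b h
        · obtain ⟨j, hyj, hnj⟩ := hs_compar hhs y (neg b) h
          exact ⟨j, hyj, by rw [← hinv b]; exact (hhs.1 j).2.2 _ hnj⟩
      obtain ⟨j, hyj, haj⟩ := hja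
      obtain ⟨k, hyk, hbk⟩ := hjb
      have hjk : j = k := hs_uniq hhs hyj hyk hy0 hy1
      exact hQ ⟨j, haj, hjk ▸ hbk⟩
    have hnc : ¬ Compat neg a b := by
      intro hC
      have hbotU : (⊥ : P) ∈ upperCone (lowerCone {a, b} ∪ lowerCone {a, neg b}) := by
        intro y hy
        have : y = ⊥ := by
          rcases hy with hy | hy
          · obtain ⟨h1, h2⟩ := mem_lowerCone_pair.mp hy
            exact hzero y (Or.inl h1) (Or.inl h2)
          · obtain ⟨h1, h2⟩ := mem_lowerCone_pair.mp hy
            exact hzero y (Or.inl h1) (Or.inr h2)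
        exact le_of_eq this
      rw [← hC] at hbotU
      have : a ≤ ⊥ := hbotU a rfl
      exact ha0 (le_bot_iff.mp this)
    have hns : commSet neg a b ≠ {(⊤ : P)} := by
      intro hC
      have hbotmem : (⊥ : P) ∈ commSet neg a b := by
        refine ⟨?_, fun y _ hyle => le_bot_iff.mp hyle⟩
        intro y hy
        have : y = ⊥ := by
          rcases hy with ((hy | hy) | hy) | hy
          · obtain ⟨h1, h2⟩ := mem_lowerCone_pair.mp hy
            exact hzero y (Or.inl h1) (Or.inl h2)
          · obtain ⟨h1, h2⟩ := mem_lowerCone_pair.mp hy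
            exact hzero y (Or.inl h1) (Or.inr h2)
          · obtain ⟨h1, h2⟩ := mem_lowerCone_pair.mp hy
            exact hzero y (Or.inr h1) (Or.inl h2)
          · obtain ⟨h1, h2⟩ := mem_lowerCone_pair.mp hy
            exact hzero y (Or.inr h1) (Or.inr h2)
        exact le_of_eq this
      rw [hC] at hbotmem
      exact hbt hbotmem
    exact iff_of_false hnc hns
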